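/- arXiv:0908.4593 — 5 statements merged into one kernel-verified Lean document; each statement's English description precedes it below -/
import Mathlib

section
/- Let Q : ℝ → M₃(ℝ) be a differentiable matrix-valued function, Φ : ℝ → M₃(ℝ) a differentiable symmetric-matrix-valued function, and ρ₀ : ℝ → ℝ differentiable. Define the homogeneous ansatz v(t,x) = Q(t)x, ρ(t,x) = ρ₀(t), φ(t,x) = ½⟨x, Φ(t)x⟩. Then (v, ρ, φ) satisfies the Newtonian dust system on all of ℝ × ℝ³ if and only if for all t: Q̇(t) = −Q(t)² − Φ(t), ρ̇₀(t) = −ρ₀(t)·tr Q(t), and tr Φ(t) = 4πG ρ₀(t). -/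
open MeasureTheory Real Matrix
open scoped ENNReal
noncomputable section

/-- ℝ³ with Cartesian coordinates. -/
abbrev V3 := Fin 3 → ℝ

/-- Partial derivative `∂_i f (x)` of a scalar function on ℝ³. -/
def pd (f : V3 → ℝ) (i : Fin 3) (x : V3) : ℝ := fderiv ℝ f x (Pi.single i 1)

/-- The Newtonian dust (Euler–Poisson) system with gravitational constant `Gc`:
(i) `∂ₜ v^a + v^b ∂_b v^a = −∂_a φ`,
(ii) `∂ₜ ρ + v^a ∂_a ρ = −ρ ∂_a v^a`,
(iii) `Δφ = 4πG ρ`, at every time `t` and point `x`. -/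
def NewtonianDust (Gc : ℝ) (v : ℝ → V3 → V3) (ρ φ : ℝ → V3 → ℝ) : Prop :=
  ∀ t x,
    (∀ a, deriv (fun s => v s x a) t + ∑ b, v t x b * pd (fun y => v t y a) b x
        = - pd (φ t) a x) ∧
    (deriv (fun s => ρ s x) t + ∑ b, v t x b * pd (ρ t) b x
        = - ρ t x * ∑ a, pd (fun y => v t y a) a x) ∧
    (∑ a, pd (pd (φ t) a) a x = 4 * π * Gc * ρ t x)

/-! For the linear velocity field and the quadratic potential all spatial derivatives are
constant matrix entries: `∂_b (Q x)_a = Q_ab` and, `Φ` being symmetric, `∇φ = Φ x`. Euler's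
equation therefore reads `(Q̇ + Q² + Φ) x = 0` for every `x`, i.e. `Q̇ + Q² + Φ = 0`, while the
continuity and Poisson equations no longer depend on `x`. -/

def matrixDeriv {m n : Type*} (Q : ℝ → Matrix m n ℝ) (t : ℝ) : Matrix m n ℝ :=
  Matrix.of fun a b => deriv (fun s => Q s a b) t

lemma deriv_mulVec_apply {m n : Type*} [Fintype n] {Q : ℝ → Matrix m n ℝ} {t : ℝ}
    (hQ : ∀ a b, DifferentiableAt ℝ (fun s => Q s a b) t) (x : n → ℝ) (a : m) :
    deriv (fun s => (Q s *ᵥ x) a) t = (matrixDeriv Q t *ᵥ x) a := by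
  simp only [mulVec, dotProduct, matrixDeriv, of_apply]
  rw [deriv_fun_sum fun c _ => (hQ a c).mul_const (x c)]
  simp only [deriv_mul_const (hQ a _)]

lemma pd_eq_of_hasFDerivAt {f : V3 → ℝ} {f' : V3 →L[ℝ] ℝ} {x : V3} (h : HasFDerivAt f f' x)
    (i : Fin 3) : pd f i x = f' (Pi.single i 1) := by
  rw [pd, h.fderiv]

lemma pd_const (c : ℝ) (i : Fin 3) (x : V3) : pd (fun _ => c) i x = 0 := by
  simp [pd]

lemma pd_mulVec_apply (A : Matrix (Fin 3) (Fin 3) ℝ) (a b : Fin 3) (x : V3) :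
    pd (fun y => (A *ᵥ y) a) b x = A a b := by
  let L : V3 →L[ℝ] ℝ := .proj a ∘L LinearMap.toContinuousLinearMap A.mulVecLin
  have h : HasFDerivAt (fun y => (A *ᵥ y) a) L x := L.hasFDerivAt
  rw [pd_eq_of_hasFDerivAt h]
  simp [L]

lemma pd_const_mul_dotProduct_mulVec (c : ℝ) (A : Matrix (Fin 3) (Fin 3) ℝ) (a : Fin 3)
    (x : V3) : pd (fun y => c * (y ⬝ᵥ (A *ᵥ y))) a x = c * ((A *ᵥ x) a + (Aᵀ *ᵥ x) a) := by
  let B : V3 →L[ℝ] V3 →L[ℝ] ℝ := LinearMap.toContinuousLinearMap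
    (LinearMap.toContinuousLinearMap.toLinearMap ∘ₗ Matrix.toLinearMap₂' ℝ A)
  have hB : ∀ y z, B y z = y ⬝ᵥ (A *ᵥ z) := fun y z => Matrix.toLinearMap₂'_apply' A y z
  have h := (B.hasFDerivAt_of_bilinear (hasFDerivAt_id x) (hasFDerivAt_id x)).const_mul c
  simp only [id, hB] at h
  rw [pd_eq_of_hasFDerivAt h]
  simp [hB, mulVec_transpose, vecMul, col_apply', mul_add, add_comm]

lemma pd_half_quadForm_of_symm {A : Matrix (Fin 3) (Fin 3) ℝ} (hA : Aᵀ = A) (a : Fin 3)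
    (x : V3) : pd (fun y => 1 / 2 * ∑ i, ∑ j, y i * (A i j * y j)) a x = (A *ᵥ x) a := by
  have hq : ∀ y : V3, ∑ i, ∑ j, y i * (A i j * y j) = y ⬝ᵥ (A *ᵥ y) := fun y => by
    simp only [dotProduct, mulVec, Finset.mul_sum]
  simp only [hq, pd_const_mul_dotProduct_mulVec, hA]
  ring

lemma laplacian_half_quadForm_of_symm {A : Matrix (Fin 3) (Fin 3) ℝ} (hA : Aᵀ = A) (x : V3) :
    ∑ a, pd (pd (fun y => 1 / 2 * ∑ i, ∑ j, y i * (A i j * y j)) a) a x = A.trace := by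
  simp only [funext (pd_half_quadForm_of_symm hA _), pd_mulVec_apply]
  rfl

lemma sum_mulVec_mul_pd_mulVec (A : Matrix (Fin 3) (Fin 3) ℝ) (a : Fin 3) (x : V3) :
    ∑ b, (A *ᵥ x) b * pd (fun y => (A *ᵥ y) a) b x = ((A * A) *ᵥ x) a := by
  simp only [pd_mulVec_apply, ← mulVec_mulVec]
  simp only [mulVec, dotProduct, mul_comm]

lemma continuity_eq_const_density_iff (A : Matrix (Fin 3) (Fin 3) ℝ) (r dr : ℝ) (x : V3) :
    dr + ∑ b, (A *ᵥ x) b * pd (fun _ => r) b x = -r * ∑ a, pd (fun y => (A *ᵥ y) a) a x ↔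
      dr = -r * A.trace := by
  simp only [pd_const, pd_mulVec_apply, mul_zero, Finset.sum_const_zero, add_zero]
  rfl

lemma forall_mulVec_add_eq_neg_iff {m n : Type*} [Fintype n] {A B C : Matrix m n ℝ} :
    (∀ x a, (A *ᵥ x) a + (B *ᵥ x) a = -(C *ᵥ x) a) ↔ ∀ a b, A a b = -B a b - C a b := by
  have h : ∀ x, (∀ a, (A *ᵥ x) a + (B *ᵥ x) a = -(C *ᵥ x) a) ↔ A *ᵥ x = (-B - C) *ᵥ x :=
    fun x => by
      simp only [funext_iff, sub_mulVec, neg_mulVec, Pi.sub_apply, Pi.neg_apply]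
      exact forall_congr' fun a => by constructor <;> intro <;> linarith
  rw [forall_congr' h, ← ext_iff_mulVec, ← Matrix.ext_iff]
  rfl

theorem homogeneous_ansatz_iff_general (Gc : ℝ)
    (Q Φ : ℝ → Matrix (Fin 3) (Fin 3) ℝ) (ρ₀ : ℝ → ℝ)
    (hQ : ∀ a b, Differentiable ℝ (fun t => Q t a b))
    (hΦsymm : ∀ t, (Φ t)ᵀ = Φ t) :
    NewtonianDust Gc (fun t x => (Q t).mulVec x) (fun t _ => ρ₀ t)
        (fun t x => (1 / 2) * ∑ a, ∑ b, x a * (Φ t a b * x b)) ↔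
      ∀ t, (∀ a b, deriv (fun s => Q s a b) t = -((Q t * Q t) a b) - Φ t a b) ∧
        deriv ρ₀ t = -ρ₀ t * (Q t).trace ∧
        (Φ t).trace = 4 * π * Gc * ρ₀ t := by
  simp only [NewtonianDust, deriv_mulVec_apply fun a b => hQ a b _, sum_mulVec_mul_pd_mulVec,
    pd_half_quadForm_of_symm (hΦsymm _), continuity_eq_const_density_iff,
    laplacian_half_quadForm_of_symm (hΦsymm _)]
  refine forall_congr' fun t => ?_
  rw [forall_and, forall_and, forall_const, forall_const, forall_mulVec_add_eq_neg_iff]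
  rfl

/-- The homogeneous ansatz `v(t,x) = Q(t)x`, `ρ(t,x) = ρ₀(t)`,
`φ(t,x) = ½⟨x, Φ(t)x⟩` solves the Newtonian dust system iff
`Q̇ = −Q² − Φ`, `ρ̇₀ = −ρ₀ tr Q`, and `tr Φ = 4πG ρ₀`. -/
theorem homogeneous_ansatz_iff (Gc : ℝ) (hGc : 0 < Gc)
    (Q Φ : ℝ → Matrix (Fin 3) (Fin 3) ℝ) (ρ₀ : ℝ → ℝ)
    (hQ : ∀ a b, Differentiable ℝ (fun t => Q t a b))
    (hΦ : ∀ a b, Differentiable ℝ (fun t => Φ t a b))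
    (hΦsymm : ∀ t, (Φ t)ᵀ = Φ t)
    (hρ₀ : Differentiable ℝ ρ₀) :
    NewtonianDust Gc (fun t x => (Q t).mulVec x) (fun t _ => ρ₀ t)
        (fun t x => (1 / 2) * ∑ a, ∑ b, x a * (Φ t a b * x b)) ↔
      ∀ t, (∀ a b, deriv (fun s => Q s a b) t = -((Q t * Q t) a b) - Φ t a b) ∧
        deriv ρ₀ t = -ρ₀ t * (Q t).trace ∧
        (Φ t).trace = 4 * π * Gc * ρ₀ t :=
  homogeneous_ansatz_iff_general Gc Q Φ ρ₀ hQ hΦsymm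
end
end

section
/- For all vectors u, n, w ∈ ℝ³ and every 3×3 real matrix M, the backreaction integrand I(M)_{ab} := ⟨u,n⟩ M_{ab} − (Mu)_a n_b is unchanged under the replacement M ↦ M + w nᵀ, i.e. I(M + w nᵀ) = I(M). (Interpretation: the Newtonian backreaction surface integrand, built from the velocity inhomogeneity u = δv and its gradient M = ∇δv at a boundary point with normal n, does not depend on the normal-derivative part w nᵀ of the gradient, hence only on the boundary values of δv.) -/
open Matrix
open scoped RealInnerProductSpace
noncomputable section

/-- ℝ³ with the Euclidean inner product. -/
abbrev E3 := EuclideanSpace ℝ (Fin 3)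

/-- The Newtonian backreaction surface integrand, built from the velocity
inhomogeneity `u = δv` and its gradient `M = ∇δv` at a boundary point with
outward normal `n`: `I(M)_{ab} = ⟨u,n⟩ M_{ab} − (Mu)_a n_b`. -/
def backreactionIntegrand (u n : E3) (M : Matrix (Fin 3) (Fin 3) ℝ)
    (a b : Fin 3) : ℝ :=
  ⟪u, n⟫ * M a b - M.mulVec (fun c => u c) a * n b

theorem Matrix.vecMulVec_mulVec_apply {m n R : Type*} [Fintype n] [CommSemiring R]
    (w : m → R) (v u : n → R) (i : m) :
    (vecMulVec w v *ᵥ u) i = (v ⬝ᵥ u) * w i := by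
  rw [vecMulVec_mulVec]
  simp [mul_comm]

theorem EuclideanSpace.real_inner_eq_dotProduct {ι : Type*} [Fintype ι]
    (x y : EuclideanSpace ℝ ι) : ⟪x, y⟫ = (fun i => y i) ⬝ᵥ (fun i => x i) :=
  rfl

/-- The backreaction integrand is unchanged under `M ↦ M + w nᵀ`; hence it
does not depend on the normal-derivative part of the velocity gradient. -/
theorem backreactionIntegrand_add_normal_part (u n w : E3)
    (M : Matrix (Fin 3) (Fin 3) ℝ) (a b : Fin 3) :
    backreactionIntegrand u n (M + Matrix.of fun p q => w p * n q) a b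
      = backreactionIntegrand u n M a b := by
  have hnormal : (Matrix.of fun p q => w p * n q) = vecMulVec (fun p => w p) (fun q => n q) :=
    rfl
  -- `(w nᵀ) u = ⟨u, n⟩ w`, so the normal part adds `⟨u, n⟩ w_a n_b` to both terms.
  simp only [backreactionIntegrand, hnormal, add_mulVec, Pi.add_apply, Matrix.add_apply,
    vecMulVec_mulVec_apply, vecMulVec_apply, EuclideanSpace.real_inner_eq_dotProduct]
  ring
end
end

section
/- Let v be a time-dependent C¹ velocity field on ℝ³ with flow map α, and let ρ : ℝ × ℝ³ → ℝ be C¹ and satisfy the continuity equation ∂_t ρ + v^a ∂_a ρ = −ρ ∂_a v^a everywhere. Then for every bounded open set G the total mass t ↦ ∫_{G_t} ρ(t,x) d³x is constant in t. -/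
/-!
Along a trajectory `s ↦ α s x`, the continuity equation says that `ρ` changes at the rate
`-ρ div v`, while Liouville's formula `∂ₜ det Dα_t(x) = div v(t, α_t x) · det Dα_t(x)` says that
the Jacobian changes at the rate `div v`. Hence `ρ(t, α_t x) · det Dα_t(x)` is constant, equal to
`ρ(t₀, x)`; the Jacobian is positive (it never vanishes and equals `1` at `t₀`), so the change of
variables `y = α_t x` turns the mass in `G_t` into `∫_G ρ(t₀, ·)`.

Only the spatial regularity of each `α t` is given, so the variational equation
`∂ₜ Dα_t(x) = Dv(t, α_t x) ∘ Dα_t(x)` behind Liouville's formula is obtained by differentiating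
`α_t y = y + ∫_{t₀}^t v(s, α_s y) ds` in `y` under the integral sign. The domination comes from
Gronwall's inequality, which makes the maps `α s` Lipschitz near `x`, uniformly for `s` in compact
intervals, once a continuity argument keeps the nearby trajectories inside a tube around the
trajectory of `x` on which `v` is Lipschitz.
-/

open MeasureTheory Real
open scoped ENNReal
noncomputable section

/-- `α` is a comoving flow map for the time-dependent velocity field `v` with
initial time `t₀`: `α(t₀,·) = id`, each `α(t,·)` is a C¹ diffeomorphism of ℝ³,
and `∂ₜ α(t,x) = v(t, α(t,x))`. -/
def IsFlowMap (v : ℝ → V3 → V3) (t₀ : ℝ) (α : ℝ → V3 → V3) : Prop :=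
  (∀ x, α t₀ x = x) ∧
  (∀ t, Function.Bijective (α t) ∧ ContDiff ℝ 1 (α t) ∧
    ContDiff ℝ 1 (Function.invFun (α t))) ∧
  (∀ t x, HasDerivAt (fun s => α s x) (v t (α t x)) t)

open Set Metric Filter Topology
open scoped NNReal

section Trajectories

variable {E : Type*} [NormedAddCommGroup E] [NormedSpace ℝ E]
  {w : ℝ → E → E} {f g : ℝ → E} {M : ℝ≥0} {r : ℝ}

theorem continuous_of_trajectory (hf : ∀ s, HasDerivAt f (w s (f s)) s) : Continuous f :=
  continuous_iff_continuousAt.2 fun s => (hf s).continuousAt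

theorem hasDerivAt_comp_neg_of_trajectory (hf : ∀ s, HasDerivAt f (w s (f s)) s) (u : ℝ) :
    HasDerivAt (fun u => f (-u)) (-w (-u) (f (-u))) u := by
  simpa [Function.comp_def] using (hf (-u)).scomp u (hasDerivAt_neg u)

theorem dist_le_of_trajectories_of_lipschitzOnWith_tube {c b : ℝ}
    (hw : ∀ s ∈ Icc c b, LipschitzOnWith M (w s) (closedBall (f s) r))
    (hf : ∀ s, HasDerivAt f (w s (f s)) s) (hg : ∀ s, HasDerivAt g (w s (g s)) s)
    (hfg : dist (f c) (g c) * exp (M * (b - c)) < r) :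
    ∀ s ∈ Icc c b, dist (f s) (g s) ≤ dist (f c) (g c) * exp (M * (s - c)) := by
  set D := dist (f c) (g c)
  have hfc := continuous_of_trajectory hf
  have hgc := continuous_of_trajectory hg
  have hbound_lt : ∀ s ≤ b, D * exp (M * (s - c)) < r := fun s hs =>
    lt_of_le_of_lt (by gcongr) hfg
  have hr : 0 ≤ r := (mul_nonneg dist_nonneg (exp_pos _).le).trans hfg.le
  let S := {s | dist (f s) (g s) ≤ D * exp (M * (s - c))}
  have hS : IsClosed (S ∩ Icc c b) :=
    (isClosed_le (hfc.dist hgc) (by fun_prop)).inter isClosed_Icc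
  refine fun s hs => hS.Icc_subset_of_forall_mem_nhdsWithin (by simp [S, D]) ?_ hs
  rintro x ⟨hxS, hxc, hxb⟩
  -- Near `x` the trajectory `g` stays in the tube, so Gronwall's inequality restarts from `x`.
  have hnear : ∀ᶠ τ in 𝓝 x, dist (f τ) (g τ) < r :=
    (hfc.dist hgc).continuousAt.eventually_lt continuousAt_const
      (hxS.trans_lt (hbound_lt x hxb.le))
  obtain ⟨z, hxz, hz⟩ := exists_Ico_subset_of_mem_nhds hnear ⟨b, hxb⟩
  have hgron := dist_le_of_trajectories_ODE_of_mem (s := fun τ => closedBall (f τ) r)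
    (fun τ hτ => hw τ ⟨hxc.trans hτ.1, hτ.2.le.trans (min_le_right z b)⟩) hfc.continuousOn
    (fun τ _ => (hf τ).hasDerivWithinAt) (fun τ hτ => mem_closedBall_self hr)
    hgc.continuousOn (fun τ _ => (hg τ).hasDerivWithinAt)
    (fun τ hτ => mem_closedBall'.2 (hz ⟨hτ.1, hτ.2.trans_le (min_le_left z b)⟩).le) le_rfl
  refine mem_of_superset (Icc_mem_nhdsGT (lt_min hxz hxb)) fun τ hτ => ?_
  calc dist (f τ) (g τ) ≤ dist (f x) (g x) * exp (M * (τ - x)) := hgron τ hτ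
    _ ≤ D * exp (M * (x - c)) * exp (M * (τ - x)) := by gcongr; exact hxS
    _ = D * exp (M * (τ - c)) := by rw [mul_assoc, ← exp_add]; ring_nf

theorem dist_le_of_trajectories_of_lipschitzOnWith_tube_Icc {a b t₀ : ℝ} (ht₀ : t₀ ∈ Icc a b)
    (hw : ∀ s ∈ Icc a b, LipschitzOnWith M (w s) (closedBall (f s) r))
    (hf : ∀ s, HasDerivAt f (w s (f s)) s) (hg : ∀ s, HasDerivAt g (w s (g s)) s)
    (hfg : dist (f t₀) (g t₀) * exp (M * (b - a)) < r) :
    ∀ s ∈ Icc a b, dist (f s) (g s) ≤ dist (f t₀) (g t₀) * exp (M * (b - a)) := by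
  intro s hs
  rcases le_total t₀ s with hts | hst
  · have hfwd := dist_le_of_trajectories_of_lipschitzOnWith_tube (c := t₀) (b := b)
      (fun τ hτ => hw τ ⟨ht₀.1.trans hτ.1, hτ.2⟩) hf hg
      (lt_of_le_of_lt (by gcongr; linarith [ht₀.1]) hfg) s ⟨hts, hs.2⟩
    exact hfwd.trans (by gcongr _ * exp (_ * ?_); linarith [hs.2, ht₀.1])
  · have hbwd := dist_le_of_trajectories_of_lipschitzOnWith_tube (c := -t₀) (b := -a)
      (w := fun u => -w (-u)) (f := fun u => f (-u)) (g := fun u => g (-u))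
      (fun u hu => (hw (-u) ⟨le_neg.1 hu.2, neg_le.1 hu.1 |>.trans ht₀.2⟩).neg)
      (hasDerivAt_comp_neg_of_trajectory hf) (hasDerivAt_comp_neg_of_trajectory hg)
      (by simpa using lt_of_le_of_lt (by gcongr; linarith [ht₀.2]) hfg) (-s)
      ⟨neg_le_neg hst, neg_le_neg hs.1⟩
    simp only [neg_neg] at hbwd
    exact hbwd.trans (by gcongr _ * exp (_ * ?_); linarith [hs.1, ht₀.2])

end Trajectories

section Slices

variable {E G : Type*} [NormedAddCommGroup E] [NormedSpace ℝ E]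
  [NormedAddCommGroup G] [NormedSpace ℝ G] {F : ℝ → E → G}

theorem hasFDerivAt_slice {s : ℝ} {p : E}
    (hF : DifferentiableAt ℝ (fun q : ℝ × E => F q.1 q.2) (s, p)) :
    HasFDerivAt (F s)
      ((fderiv ℝ (fun q : ℝ × E => F q.1 q.2) (s, p)).comp (.inr ℝ ℝ E)) p :=
  hF.hasFDerivAt.comp p (hasFDerivAt_prodMk_right s p)

theorem differentiableAt_slice (hF : Differentiable ℝ (fun q : ℝ × E => F q.1 q.2)) (s : ℝ)
    (p : E) : DifferentiableAt ℝ (F s) p :=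
  (hasFDerivAt_slice (hF (s, p))).differentiableAt

theorem continuous_fderiv_slice (hF : ContDiff ℝ 1 (fun q : ℝ × E => F q.1 q.2)) :
    Continuous fun q : ℝ × E => fderiv ℝ (F q.1) q.2 := by
  have hslice : (fun q : ℝ × E => fderiv ℝ (F q.1) q.2) =
      fun q => (fderiv ℝ (fun q : ℝ × E => F q.1 q.2) q).comp (.inr ℝ ℝ E) := by
    funext q
    exact (hasFDerivAt_slice (hF.differentiable one_ne_zero q)).fderiv
  rw [hslice]
  exact (hF.continuous_fderiv one_ne_zero).clm_comp continuous_const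

variable [ProperSpace E]

theorem exists_lipschitzOnWith_tube (hF : ContDiff ℝ 1 (fun q : ℝ × E => F q.1 q.2))
    {f : ℝ → E} (hf : Continuous f) (a b r : ℝ) :
    ∃ M : ℝ≥0, ∀ s ∈ Icc a b, LipschitzOnWith M (F s) (closedBall (f s) r) := by
  let K := cthickening r ((fun s => (s, f s)) '' Icc a b)
  have hK : IsCompact K := (isCompact_Icc.image (continuous_id.prodMk hf)).cthickening
  obtain ⟨M, hM⟩ := hK.exists_bound_of_continuousOn (continuous_fderiv_slice hF).continuousOn
  refine ⟨M.toNNReal, fun s hs => ?_⟩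
  refine (convex_closedBall _ _).lipschitzOnWith_of_nnnorm_fderiv_le
    (fun p _ => differentiableAt_slice (hF.differentiable one_ne_zero) s p)
    fun p hp => ?_
  have hpK : (s, p) ∈ K := mem_cthickening_of_dist_le _ (s, f s) r _ ⟨s, hs, rfl⟩
    (by simpa [Prod.dist_eq] using hp)
  rw [← NNReal.coe_le_coe, coe_nnnorm]
  exact (hM _ hpK).trans (le_max_left _ _)

end Slices

theorem hasDerivAt_of_eq_add_integral_comp {F : Type*} [NormedAddCommGroup F] [NormedSpace ℝ F]
    [CompleteSpace F] {A B : ℝ → F →L[ℝ] F} {A₀ : F →L[ℝ] F} {t₀ : ℝ} (hB : Continuous B)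
    (hint : ∀ a b, IntervalIntegrable (fun s => (B s).comp (A s)) volume a b)
    (hA : ∀ t, A t = A₀ + ∫ s in t₀..t, (B s).comp (A s)) (t : ℝ) :
    HasDerivAt A ((B t).comp (A t)) t := by
  have hA_eq : A = fun t => A₀ + ∫ s in t₀..t, (B s).comp (A s) := funext hA
  have hAc : Continuous A := by
    rw [hA_eq]; exact continuous_const.add (intervalIntegral.continuous_primitive hint t₀)
  have hBA : Continuous fun s => (B s).comp (A s) := hB.clm_comp hAc
  have hprimitive := (intervalIntegral.integral_hasDerivAt_right (hint t₀ t)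
    (hBA.stronglyMeasurableAtFilter _ _) hBA.continuousAt).const_add A₀
  rwa [← hA_eq] at hprimitive

section Flow

variable {E : Type*} [NormedAddCommGroup E] [NormedSpace ℝ E] [FiniteDimensional ℝ E]
  {v α : ℝ → E → E} {t₀ : ℝ}
  (hv : ContDiff ℝ 1 (fun p : ℝ × E => v p.1 p.2)) (hα₀ : ∀ x, α t₀ x = x)
  (hα : ∀ t x, HasDerivAt (fun s => α s x) (v t (α t x)) t)
  (hdiff : ∀ t, Differentiable ℝ (α t))
include hv hα₀ hα

theorem exists_lipschitzOnWith_flow (x : E) {a b : ℝ} (ht₀ : t₀ ∈ Icc a b) :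
    ∃ δ > 0, ∃ C : ℝ≥0, ∀ s ∈ Icc a b, LipschitzOnWith C (α s) (closedBall x δ) := by
  obtain ⟨M, hM⟩ := exists_lipschitzOnWith_tube hv (continuous_of_trajectory (hα · x)) a b 1
  set L := exp (M * (b - a))
  have hL : 0 < L := exp_pos _
  have hδL : (8 * L)⁻¹ * L = 1 / 8 := by field_simp
  refine ⟨(8 * L)⁻¹, by positivity, L.toNNReal, fun s hs =>
    LipschitzOnWith.of_dist_le_mul fun y hy z hz => ?_⟩
  have hnear : ∀ y ∈ closedBall x (8 * L)⁻¹, ∀ τ ∈ Icc a b, dist (α τ y) (α τ x) ≤ 1 / 2 := by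
    intro y hy τ hτ
    have hxy : dist x y * L ≤ 1 / 8 := by
      rw [dist_comm, ← hδL]; exact mul_le_mul_of_nonneg_right hy hL.le
    have := dist_le_of_trajectories_of_lipschitzOnWith_tube_Icc ht₀ hM (hα · x) (hα · y)
      (by rw [hα₀, hα₀]; linarith) τ hτ
    rw [hα₀, hα₀] at this
    rw [dist_comm]; linarith
  have hyz : dist y z * L ≤ 1 / 4 := by
    have : dist y z ≤ 2 * (8 * L)⁻¹ :=
      (dist_triangle_right y z x).trans (by linarith [mem_closedBall.1 hy, mem_closedBall.1 hz])
    nlinarith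
  have := dist_le_of_trajectories_of_lipschitzOnWith_tube_Icc (r := 1 / 2) ht₀
    (fun τ hτ => (hM τ hτ).mono (closedBall_subset_closedBall' (by linarith [hnear y hy τ hτ])))
    (hα · y) (hα · z) (by rw [hα₀, hα₀]; linarith) s hs
  rw [hα₀, hα₀] at this
  rw [Real.coe_toNNReal _ hL.le, mul_comm]
  exact this

theorem continuous_flow : Continuous fun p : ℝ × E => α p.1 p.2 := by
  refine continuous_iff_continuousAt.2 fun ⟨t, x⟩ => ?_
  have ht : t ∈ Ioo (min t t₀ - 1) (max t t₀ + 1) :=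
    ⟨by linarith [min_le_left t t₀], by linarith [le_max_left t t₀]⟩
  obtain ⟨δ, hδ, C, hC⟩ := exists_lipschitzOnWith_flow hv hα₀ hα x
    (a := min t t₀ - 1) (b := max t t₀ + 1)
    ⟨by linarith [min_le_right t t₀], by linarith [le_max_right t t₀]⟩
  have hcont : ContinuousOn (fun p : ℝ × E => α p.1 p.2)
      (Icc (min t t₀ - 1) (max t t₀ + 1) ×ˢ closedBall x δ) :=
    continuousOn_prod_of_continuousOn_lipschitzOnWith' _ C hC
      fun y _ => (continuous_of_trajectory (hα · y)).continuousOn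
  exact hcont.continuousAt (prod_mem_nhds (Icc_mem_nhds ht.1 ht.2) (closedBall_mem_nhds x hδ))

theorem aestronglyMeasurable_fderiv_comp_fderiv_flow (x : E) (μ : Measure ℝ) :
    AEStronglyMeasurable (fun s => (fderiv ℝ (v s) (α s x)).comp (fderiv ℝ (α s) x)) μ := by
  have hDv : Continuous fun s => fderiv ℝ (v s) (α s x) :=
    (continuous_fderiv_slice hv).comp (continuous_id.prodMk (continuous_of_trajectory (hα · x)))
  borelize E
  have hDα : Measurable fun s => fderiv ℝ (α s) x :=
    (measurable_fderiv_with_param ℝ (continuous_flow hv hα₀ hα)).comp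
      (measurable_id.prodMk measurable_const)
  exact isBoundedBilinearMap_comp.continuous.comp_aestronglyMeasurable₂
    hDv.aestronglyMeasurable hDα.aestronglyMeasurable

include hdiff

theorem exists_bound_fderiv_comp_fderiv_flow (x : E) {a b : ℝ} (ht₀ : t₀ ∈ Icc a b) :
    ∃ δ > 0, ∃ Q, ∀ s ∈ Icc a b, ∀ y ∈ ball x δ,
      ‖(fderiv ℝ (v s) (α s y)).comp (fderiv ℝ (α s) y)‖ ≤ Q := by
  obtain ⟨δ, hδ, C, hC⟩ := exists_lipschitzOnWith_flow hv hα₀ hα x ht₀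
  have hDv : Continuous fun p : ℝ × E => fderiv ℝ (v p.1) (α p.1 p.2) :=
    (continuous_fderiv_slice hv).comp (continuous_fst.prodMk (continuous_flow hv hα₀ hα))
  obtain ⟨M, hM⟩ := (isCompact_Icc.prod (isCompact_closedBall x δ)).exists_bound_of_continuousOn
    hDv.continuousOn
  refine ⟨δ, hδ, M * C, fun s hs y hy => ?_⟩
  have hDvy : ‖fderiv ℝ (v s) (α s y)‖ ≤ M := hM (s, y) ⟨hs, ball_subset_closedBall hy⟩
  have hDαy : ‖fderiv ℝ (α s) y‖ ≤ C := (hdiff s y).hasFDerivAt.le_of_lipschitzOn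
    (mem_of_superset (isOpen_ball.mem_nhds hy) ball_subset_closedBall) (hC s hs)
  calc ‖(fderiv ℝ (v s) (α s y)).comp (fderiv ℝ (α s) y)‖
      ≤ ‖fderiv ℝ (v s) (α s y)‖ * ‖fderiv ℝ (α s) y‖ := ContinuousLinearMap.opNorm_comp_le _ _
    _ ≤ M * C := mul_le_mul hDvy hDαy (norm_nonneg _) ((norm_nonneg _).trans hDvy)

theorem intervalIntegrable_fderiv_comp_fderiv_flow (x : E) (a b : ℝ) :
    IntervalIntegrable (fun s => (fderiv ℝ (v s) (α s x)).comp (fderiv ℝ (α s) x)) volume a b := by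
  obtain ⟨δ, hδ, Q, hQ⟩ := exists_bound_fderiv_comp_fderiv_flow hv hα₀ hα hdiff x
    (a := min (min a b) t₀) (b := max (max a b) t₀) ⟨min_le_right _ _, le_max_right _ _⟩
  refine (intervalIntegrable_const (c := Q)).mono_fun'
    (aestronglyMeasurable_fderiv_comp_fderiv_flow hv hα₀ hα x _)
    (ae_restrict_of_forall_mem measurableSet_uIoc fun s hs => hQ s ?_ x (mem_ball_self hδ))
  have := uIoc_subset_uIcc hs
  exact ⟨le_trans (min_le_left _ _) this.1, this.2.trans (le_max_left _ _)⟩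

theorem fderiv_flow_eq_add_integral (x : E) (t : ℝ) :
    fderiv ℝ (α t) x =
      .id ℝ E + ∫ s in t₀..t, (fderiv ℝ (v s) (α s x)).comp (fderiv ℝ (α s) x) := by
  obtain ⟨δ, hδ, Q, hQ⟩ := exists_bound_fderiv_comp_fderiv_flow hv hα₀ hα hdiff x
    (a := min t₀ t) (b := max t₀ t) ⟨min_le_left _ _, le_max_left _ _⟩
  have hvα : ∀ y, Continuous fun s => v s (α s y) := fun y =>
    hv.continuous.comp (continuous_id.prodMk (continuous_of_trajectory (hα · y)))
  have hdisplacement : ∀ y, ∫ s in t₀..t, v s (α s y) = α t y - y := fun y => by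
    rw [intervalIntegral.integral_eq_sub_of_hasDerivAt (fun s _ => hα s y)
      ((hvα y).intervalIntegrable _ _), hα₀]
  have hderiv := intervalIntegral.hasFDerivAt_integral_of_dominated_of_fderiv_le
    (μ := volume) (F := fun y s => v s (α s y)) (x₀ := x) (bound := fun _ => Q) (ball_mem_nhds x hδ)
    (.of_forall fun y => (hvα y).aestronglyMeasurable) ((hvα x).intervalIntegrable _ _)
    (aestronglyMeasurable_fderiv_comp_fderiv_flow hv hα₀ hα x _)
    (.of_forall fun s hs y hy => hQ s (uIoc_subset_uIcc hs) y hy) intervalIntegrable_const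
    (.of_forall fun s _ y _ =>
      (differentiableAt_slice (hv.differentiable one_ne_zero) s (α s y)).hasFDerivAt.comp y
        (hdiff s y).hasFDerivAt)
  simp only [hdisplacement] at hderiv
  rw [← ((hdiff t x).hasFDerivAt.sub (hasFDerivAt_id x)).unique hderiv]
  abel

theorem hasDerivAt_fderiv_flow (x : E) (t : ℝ) :
    HasDerivAt (fun s => fderiv ℝ (α s) x)
      ((fderiv ℝ (v t) (α t x)).comp (fderiv ℝ (α t) x)) t :=
  hasDerivAt_of_eq_add_integral_comp
    ((continuous_fderiv_slice hv).comp (continuous_id.prodMk (continuous_of_trajectory (hα · x))))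
    (intervalIntegrable_fderiv_comp_fderiv_flow hv hα₀ hα hdiff x)
    (fderiv_flow_eq_add_integral hv hα₀ hα hdiff x) t

end Flow

section Transport

variable {E G : Type*} [NormedAddCommGroup E] [NormedSpace ℝ E] [NormedAddCommGroup G]
  [NormedSpace ℝ G]

theorem hasDerivAt_comp_curve {ρ : ℝ → E → G}
    (hρ : Differentiable ℝ (fun p : ℝ × E => ρ p.1 p.2)) {γ : ℝ → E} {γ' : E} {t : ℝ}
    (hγ : HasDerivAt γ γ' t) :
    HasDerivAt (fun s => ρ s (γ s)) (deriv (fun s => ρ s (γ t)) t + fderiv ℝ (ρ t) (γ t) γ') t := by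
  set L := fderiv ℝ (fun p : ℝ × E => ρ p.1 p.2) (t, γ t)
  have hchain : HasDerivAt (fun s => ρ s (γ s)) (L (1, γ')) t :=
    (hρ (t, γ t)).hasFDerivAt.comp_hasDerivAt (f := fun s => (s, γ s)) t
      ((hasDerivAt_id' t).prodMk hγ)
  have htime : HasDerivAt (fun s => ρ s (γ t)) (L (1, 0)) t :=
    (hρ (t, γ t)).hasFDerivAt.comp_hasDerivAt (f := fun s => (s, γ t)) t
      ((hasDerivAt_id' t).prodMk (hasDerivAt_const t _))
  rw [htime.deriv, (hasFDerivAt_slice (hρ (t, γ t))).fderiv]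
  convert hchain using 1
  rw [ContinuousLinearMap.comp_apply, ContinuousLinearMap.inr_apply, ← map_add, Prod.mk_add_mk,
    add_zero, zero_add]

end Transport

theorem trace_eq_sum_apply_single {n : ℕ} (L : (Fin n → ℝ) →L[ℝ] (Fin n → ℝ)) :
    LinearMap.trace ℝ (Fin n → ℝ) L = ∑ i, L (Pi.single i 1) i := by
  rw [LinearMap.trace_eq_matrix_trace ℝ (Pi.basisFun ℝ (Fin n)), LinearMap.toMatrix_eq_toMatrix',
    Matrix.trace]
  simp [LinearMap.toMatrix'_apply]

theorem sum_mul_pd_eq_fderiv (f : V3 → ℝ) (x w : V3) :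
    ∑ b, w b * pd f b x = fderiv ℝ f x w := by
  conv_rhs => rw [← Finset.univ_sum_single w]
  simp only [map_sum, pd]
  refine Finset.sum_congr rfl fun b _ => ?_
  rw [← smul_eq_mul, ← map_smul, ← Pi.single_smul, smul_eq_mul, mul_one]

theorem sum_pd_eq_trace {u : V3 → V3} {x : V3} (hu : DifferentiableAt ℝ u x) :
    ∑ a, pd (fun y => u y a) a x = LinearMap.trace ℝ V3 (fderiv ℝ u x) := by
  simp [trace_eq_sum_apply_single, pd, fderiv_apply hu]

theorem Matrix.hasDerivAt_det_fin_three {m : ℝ → Matrix (Fin 3) (Fin 3) ℝ}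
    {B : Matrix (Fin 3) (Fin 3) ℝ} {t : ℝ}
    (h : ∀ i j, HasDerivAt (fun s => m s i j) ((B * m t) i j) t) :
    HasDerivAt (fun s => (m s).det) (B.trace * (m t).det) t := by
  simp only [Matrix.det_fin_three]
  refine (((((((h 0 0).mul (h 1 1)).mul (h 2 2)).sub
    (((h 0 0).mul (h 1 2)).mul (h 2 1))).sub
    (((h 0 1).mul (h 1 0)).mul (h 2 2))).add
    (((h 0 1).mul (h 1 2)).mul (h 2 0))).add
    (((h 0 2).mul (h 1 0)).mul (h 2 1)) |>.sub
    (((h 0 2).mul (h 1 1)).mul (h 2 0))).congr_deriv ?_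
  simp only [Matrix.trace_fin_three, Matrix.mul_apply, Fin.sum_univ_three, Pi.mul_apply]
  ring

theorem hasDerivAt_det_of_hasDerivAt_comp {A : ℝ → V3 →L[ℝ] V3} {B : V3 →L[ℝ] V3} {t : ℝ}
    (hA : HasDerivAt A (B.comp (A t)) t) :
    HasDerivAt (fun s => (A s).det) (LinearMap.trace ℝ V3 B * (A t).det) t := by
  let m : ℝ → Matrix (Fin 3) (Fin 3) ℝ := fun s => LinearMap.toMatrix' (A s : V3 →ₗ[ℝ] V3)
  have hentries : ∀ i j, HasDerivAt (fun s => m s i j)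
      ((LinearMap.toMatrix' (B : V3 →ₗ[ℝ] V3) * m t) i j) t := by
    intro i j
    rw [← LinearMap.toMatrix'_mul]
    simpa [m, LinearMap.toMatrix'_apply] using
      hasDerivAt_pi.1 (hA.clm_apply (hasDerivAt_const t (Pi.single j 1))) i
  have hdet := Matrix.hasDerivAt_det_fin_three hentries
  simp only [m, LinearMap.det_toMatrix'] at hdet
  rwa [LinearMap.trace_eq_matrix_trace ℝ (Pi.basisFun ℝ (Fin 3)), LinearMap.toMatrix_eq_toMatrix']

theorem det_fderiv_ne_zero_of_leftInverse {E : Type*} [NormedAddCommGroup E] [NormedSpace ℝ E]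
    {f g : E → E} {x : E} (hf : DifferentiableAt ℝ f x) (hg : DifferentiableAt ℝ g (f x))
    (hgf : Function.LeftInverse g f) : (fderiv ℝ f x).det ≠ 0 := by
  have hcomp := hg.hasFDerivAt.comp x hf.hasFDerivAt
  rw [show g ∘ f = id from funext hgf] at hcomp
  have hdet := congrArg ContinuousLinearMap.det ((hasFDerivAt_id x).unique hcomp)
  rw [ContinuousLinearMap.det, ContinuousLinearMap.det, ContinuousLinearMap.coe_id, LinearMap.det_id,
    ContinuousLinearMap.toLinearMap_comp, LinearMap.det_comp] at hdet
  exact right_ne_zero_of_mul_eq_one hdet.symm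

namespace IsFlowMap

variable {v : ℝ → V3 → V3} {t₀ : ℝ} {α : ℝ → V3 → V3}

theorem differentiable (hα : IsFlowMap v t₀ α) (t : ℝ) : Differentiable ℝ (α t) :=
  (hα.2.1 t).2.1.differentiable one_ne_zero

theorem det_fderiv_initial (hα : IsFlowMap v t₀ α) (x : V3) : (fderiv ℝ (α t₀) x).det = 1 := by
  rw [show α t₀ = id from funext hα.1, fderiv_id, ContinuousLinearMap.det,
    ContinuousLinearMap.coe_id, LinearMap.det_id]

theorem hasDerivAt_det_fderiv (hα : IsFlowMap v t₀ α)
    (hv : ContDiff ℝ 1 (fun p : ℝ × V3 => v p.1 p.2)) (x : V3) (t : ℝ) :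
    HasDerivAt (fun s => (fderiv ℝ (α s) x).det)
      (LinearMap.trace ℝ V3 (fderiv ℝ (v t) (α t x)) * (fderiv ℝ (α t) x).det) t :=
  hasDerivAt_det_of_hasDerivAt_comp <| hasDerivAt_fderiv_flow hv hα.1 hα.2.2
    hα.differentiable x t

theorem det_fderiv_pos (hα : IsFlowMap v t₀ α) (hv : ContDiff ℝ 1 (fun p : ℝ × V3 => v p.1 p.2))
    (t : ℝ) (x : V3) : 0 < (fderiv ℝ (α t) x).det := by
  have hJ : Continuous fun s => (fderiv ℝ (α s) x).det :=
    continuous_iff_continuousAt.2 fun s => (hα.hasDerivAt_det_fderiv hv x s).continuousAt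
  have hJne : ∀ s, (fderiv ℝ (α s) x).det ≠ 0 := fun s =>
    det_fderiv_ne_zero_of_leftInverse (hα.differentiable s x)
      ((hα.2.1 s).2.2.differentiable one_ne_zero _)
      (Function.leftInverse_invFun (hα.2.1 s).1.1)
  by_contra! hneg
  obtain ⟨s, -, hs⟩ := intermediate_value_uIcc (a := t) (b := t₀) hJ.continuousOn
    (show (0 : ℝ) ∈ uIcc _ _ by rw [hα.det_fderiv_initial]; exact mem_uIcc.2 (Or.inl ⟨hneg, zero_le_one⟩))
  exact hJne s hs

theorem density_mul_det_fderiv (hα : IsFlowMap v t₀ α)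
    (hv : ContDiff ℝ 1 (fun p : ℝ × V3 => v p.1 p.2))
    {ρ : ℝ → V3 → ℝ} (hρ : ContDiff ℝ 1 (fun p : ℝ × V3 => ρ p.1 p.2))
    (hcont : ∀ t x, deriv (fun s => ρ s x) t + ∑ b, v t x b * pd (ρ t) b x
      = - ρ t x * ∑ a, pd (fun y => v t y a) a x) (t : ℝ) (x : V3) :
    ρ t (α t x) * (fderiv ℝ (α t) x).det = ρ t₀ x := by
  have hmaterial : ∀ s, HasDerivAt (fun τ => ρ τ (α τ x))
      (-ρ s (α s x) * LinearMap.trace ℝ V3 (fderiv ℝ (v s) (α s x))) s := fun s => by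
    have hcont_s := hcont s (α s x)
    rw [sum_mul_pd_eq_fderiv,
      sum_pd_eq_trace (differentiableAt_slice (hv.differentiable one_ne_zero) s (α s x))] at hcont_s
    rw [← hcont_s]
    exact hasDerivAt_comp_curve (hρ.differentiable one_ne_zero) (hα.2.2 s x)
  have hconst : ∀ s, HasDerivAt (fun τ => ρ τ (α τ x) * (fderiv ℝ (α τ) x).det) 0 s := fun s =>
    ((hmaterial s).mul (hα.hasDerivAt_det_fderiv hv x s)).congr_deriv (by ring)
  have := is_const_of_deriv_eq_zero (fun s => (hconst s).differentiableAt)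
    (fun s => (hconst s).deriv) t t₀
  rw [this, hα.1, hα.det_fderiv_initial, mul_one]

end IsFlowMap

theorem mass_conservation_general (v : ℝ → V3 → V3)
    (hv : ContDiff ℝ 1 (fun p : ℝ × V3 => v p.1 p.2))
    (t₀ : ℝ) (α : ℝ → V3 → V3) (hα : IsFlowMap v t₀ α)
    (ρ : ℝ → V3 → ℝ) (hρ : ContDiff ℝ 1 (fun p : ℝ × V3 => ρ p.1 p.2))
    (hcont : ∀ t x, deriv (fun s => ρ s x) t + ∑ b, v t x b * pd (ρ t) b x
      = - ρ t x * ∑ a, pd (fun y => v t y a) a x)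
    (G : Set V3) (hGo : IsOpen G) :
    ∀ t₁ t₂, (∫ x in α t₁ '' G, ρ t₁ x) = ∫ x in α t₂ '' G, ρ t₂ x := by
  have hmass : ∀ t, ∫ x in α t '' G, ρ t x = ∫ x in G, ρ t₀ x := fun t => by
    rw [integral_image_eq_integral_abs_det_fderiv_smul volume hGo.measurableSet
      (fun x _ => (hα.differentiable t x).hasFDerivAt.hasFDerivWithinAt)
      (hα.2.1 t).1.1.injOn]
    refine setIntegral_congr_fun hGo.measurableSet fun x _ => ?_
    rw [abs_of_pos (hα.det_fderiv_pos hv t x), smul_eq_mul, mul_comm,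
      hα.density_mul_det_fderiv hv hρ hcont t x]
  intro t₁ t₂
  rw [hmass, hmass]

/-- If `ρ` is C¹ and satisfies the continuity equation
`∂ₜ ρ + v^a ∂_a ρ = −ρ ∂_a v^a`, then for every bounded open set `G` the total
mass `t ↦ ∫_{G_t} ρ(t,x) d³x` over the comoving domain `G_t = α(t,G)` is
constant in `t`. -/
theorem mass_conservation (v : ℝ → V3 → V3)
    (hv : ContDiff ℝ 1 (fun p : ℝ × V3 => v p.1 p.2))
    (t₀ : ℝ) (α : ℝ → V3 → V3) (hα : IsFlowMap v t₀ α)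
    (ρ : ℝ → V3 → ℝ) (hρ : ContDiff ℝ 1 (fun p : ℝ × V3 => ρ p.1 p.2))
    (hcont : ∀ t x, deriv (fun s => ρ s x) t + ∑ b, v t x b * pd (ρ t) b x
      = - ρ t x * ∑ a, pd (fun y => v t y a) a x)
    (G : Set V3) (hGo : IsOpen G) (hGb : Bornology.IsBounded G)
    (hGpos : 0 < volume G) (hGfin : volume G < ⊤) :
    ∀ t₁ t₂, (∫ x in α t₁ '' G, ρ t₁ x) = ∫ x in α t₂ '' G, ρ t₂ x :=
  mass_conservation_general v hv t₀ α hα ρ hρ hcont G hGo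
end
end

section
/- Let s ⊆ ℝ³ be an open connected set and let v : ℝ³ → ℝ³ be C² on s such that at every point x ∈ s the derivative Dv(x) is an antisymmetric linear map (⟨Dv(x)u, w⟩ = −⟨u, Dv(x)w⟩ for all u, w ∈ ℝ³). Then Dv is constant on s; i.e., there exist an antisymmetric 3×3 matrix Ω and a vector W ∈ ℝ³ such that v(x) = Ωx + W for all x ∈ s. (The infinitesimal rigid motions Y^a = Ω^a_b x^b + W^a are exactly the vector fields inducing no deformation of the Euclidean metric.) -/
/-!
The second derivative gives a trilinear form `(h, u, w) ↦ ⟪D²v(x) h u, w⟫` that is symmetric in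
`(h, u)` (Schwarz) and, by differentiating the antisymmetry of `Dv`, antisymmetric in `(u, w)`.
Such a form vanishes identically. So `Dv` has zero derivative on the connected open set `s` and is
constant there, which makes `v` affine on `s` with antisymmetric linear part.
-/

open Matrix
open scoped RealInnerProductSpace
noncomputable section

open scoped Topology

section
variable {E : Type*} [NormedAddCommGroup E] [InnerProductSpace ℝ E]

theorem eq_zero_of_symmetric_of_skew {T : E → E → E} (hsymm : ∀ a b, T a b = T b a)
    (hskew : ∀ a b c, ⟪T a b, c⟫ = -⟪b, T a c⟫) (a b : E) : T a b = 0 := by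
  -- Each step around the cycle `(a, b, c)` costs a sign, and three steps return to the start.
  have cycle : ∀ a b c, ⟪T a b, c⟫ = -⟪T c a, b⟫ := fun a b c => by
    rw [hskew, real_inner_comm, hsymm]
  have hvanish : ∀ c, ⟪T a b, c⟫ = 0 := fun c => by
    linarith [cycle a b c, cycle c a b, cycle b c a]
  exact inner_self_eq_zero.1 (hvanish _)

theorem fderiv_apply_skew_of_eventually_skew {g : E → E →L[ℝ] E} {x : E}
    (hg : DifferentiableAt ℝ g x)
    (hskew : ∀ᶠ y in 𝓝 x, ∀ u w, ⟪g y u, w⟫ = -⟪u, g y w⟫) (h u w : E) :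
    ⟪fderiv ℝ g x h u, w⟫ = -⟪u, fderiv ℝ g x h w⟫ := by
  let Φ : (E →L[ℝ] E) →L[ℝ] ℝ :=
    (innerSL ℝ w).comp (ContinuousLinearMap.apply ℝ E u) +
      (innerSL ℝ u).comp (ContinuousLinearMap.apply ℝ E w)
  have hΦ : ∀ A : E →L[ℝ] E, Φ A = ⟪A u, w⟫ + ⟪u, A w⟫ := fun A => by
    simp [Φ, real_inner_comm w]
  have hΦg : (Φ ∘ g) =ᶠ[𝓝 x] fun _ => 0 := hskew.mono fun y hy => by
    simp [hΦ, hy]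
  have hderiv : Φ.comp (fderiv ℝ g x) = 0 :=
    (Φ.hasFDerivAt.comp x hg.hasFDerivAt).unique
      ((hasFDerivAt_const 0 x).congr_of_eventuallyEq hΦg)
  have := congrArg (fun L => L h) hderiv
  simp only [ContinuousLinearMap.comp_apply, hΦ, _root_.zero_apply] at this
  linarith

theorem fderiv_fderiv_eq_zero_of_eventually_skew {v : E → E} {x : E} (hv : ContDiffAt ℝ 2 v x)
    (hskew : ∀ᶠ y in 𝓝 x, ∀ u w, ⟪fderiv ℝ v y u, w⟫ = -⟪u, fderiv ℝ v y w⟫) :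
    fderiv ℝ (fderiv ℝ v) x = 0 := by
  have hdiff : DifferentiableAt ℝ (fderiv ℝ v) x :=
    (hv.fderiv_right (m := 1) le_rfl).differentiableAt one_ne_zero
  ext a b : 2
  exact eq_zero_of_symmetric_of_skew (hv.isSymmSndFDerivAt (by simp))
    (fderiv_apply_skew_of_eventually_skew hdiff hskew) a b
end

theorem Matrix.transpose_toEuclideanLin_symm_eq_neg {n : Type*} [Fintype n] [DecidableEq n]
    (L : EuclideanSpace ℝ n →ₗ[ℝ] EuclideanSpace ℝ n) (hskew : ∀ u w, ⟪L u, w⟫ = -⟪u, L w⟫) :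
    (toEuclideanLin.symm L)ᵀ = -toEuclideanLin.symm L := by
  apply toEuclideanLin.injective
  rw [← conjTranspose_eq_transpose_of_trivial, toEuclideanLin_conjTranspose_eq_adjoint,
    LinearEquiv.apply_symm_apply, map_neg, LinearEquiv.apply_symm_apply, eq_comm,
    LinearMap.eq_adjoint_iff]
  intro u w
  simp [hskew]

/-- If `v` is C² on an open connected set `s ⊆ ℝ³` and its derivative `Dv(x)`
is antisymmetric at every point of `s`, then `v` is an infinitesimal rigid
motion on `s`: there are an antisymmetric matrix `Ω` and a vector `W` with
`v(x) = Ωx + W` on `s` (in particular `Dv` is constant on `s`). -/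
theorem antisymmetric_gradient_is_rigid_motion (s : Set E3)
    (hso : IsOpen s) (hsc : IsConnected s) (v : E3 → E3)
    (hv : ContDiffOn ℝ 2 v s)
    (hanti : ∀ x ∈ s, ∀ u w : E3, ⟪fderiv ℝ v x u, w⟫ = -⟪u, fderiv ℝ v x w⟫) :
    ∃ (Ω : Matrix (Fin 3) (Fin 3) ℝ) (W : Fin 3 → ℝ), Ωᵀ = -Ω ∧
      ∀ x ∈ s, ∀ a, v x a = (∑ b, Ω a b * x b) + W a := by
  obtain ⟨x₀, hx₀⟩ := hsc.nonempty
  have hC2 : ∀ x ∈ s, ContDiffAt ℝ 2 v x := fun x hx => hv.contDiffAt (hso.mem_nhds hx)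
  have hDv_diff : DifferentiableOn ℝ (fderiv ℝ v) s := fun x hx =>
    ((hC2 x hx).fderiv_right (m := 1) le_rfl).differentiableAt one_ne_zero
      |>.differentiableWithinAt
  have hD2v_zero : ∀ x ∈ s, fderiv ℝ (fderiv ℝ v) x = 0 := fun x hx =>
    fderiv_fderiv_eq_zero_of_eventually_skew (hC2 x hx)
      (Filter.eventually_of_mem (hso.mem_nhds hx) hanti)
  have hDv_const : ∀ x ∈ s, fderiv ℝ v x = fderiv ℝ v x₀ := fun x hx =>
    hso.is_const_of_fderiv_eq_zero hsc.isPreconnected hDv_diff hD2v_zero hx hx₀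
  set L := fderiv ℝ v x₀
  obtain ⟨W, hW⟩ := hso.exists_eq_add_of_fderiv_eq hsc.isPreconnected
    (hv.differentiableOn two_ne_zero) L.differentiableOn
    (fun x hx => by rw [hDv_const x hx, L.fderiv])
  set Ω := toEuclideanLin.symm L.toLinearMap
  refine ⟨Ω, W, transpose_toEuclideanLin_symm_eq_neg _ (hanti x₀ hx₀), fun x hx a => ?_⟩
  have hLx : L x = toEuclideanLin Ω x := by simp [Ω]
  rw [hW hx, PiLp.add_apply, hLx]
  rfl
end
end

section
/- Let R > 0 and let δv, δw : ℝ³ → ℝ³ be C¹ on a neighbourhood of the sphere S(0,R) with δv(x) = δw(x) for all x ∈ S(0,R). Then the Newtonian backreaction computed from the two fields coincides: ∫_{S(0,R)} [⟨δv(x), n(x)⟩ (Dδv(x))_{ab} − (Dδv(x)·δv(x))_a n_b(x)] dμH²(x) = ∫_{S(0,R)} [⟨δw(x), n(x)⟩ (Dδw(x))_{ab} − (Dδw(x)·δw(x))_a n_b(x)] dμH²(x) for all indices a, b. (The backreaction depends only on the boundary values of the velocity inhomogeneity; the normal derivative drops out by antisymmetrization.) -/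
open MeasureTheory Real
open scoped RealInnerProductSpace ENNReal
noncomputable section

/-!
If `δv = δw` on the sphere, their derivatives at a point `x` of the sphere agree on every
tangent vector (differentiate along a curve in the sphere), so `D := Dδv(x) - Dδw(x)`
satisfies `‖n‖² D u = ⟪n, u⟫ D n`: only the normal derivative `D n` can differ. Substituting
this into `⟪v, n⟫ D e_b - ⟪n, e_b⟫ D v` gives `(⟪v, n⟫⟪n, e_b⟫ - ⟪n, e_b⟫⟪n, v⟫) D n = 0`,
so the two integrands agree pointwise on the sphere.
-/

section LinearAlgebra

variable {E F : Type*} [NormedAddCommGroup E] [InnerProductSpace ℝ E] [AddCommGroup F] [Module ℝ F]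

theorem LinearMap.norm_sq_smul_apply_eq_inner_smul_apply (D : E →ₗ[ℝ] F) {n : E}
    (hD : ∀ t, ⟪n, t⟫ = 0 → D t = 0) (u : E) : ‖n‖ ^ 2 • D u = ⟪n, u⟫ • D n := by
  have hperp : ⟪n, ‖n‖ ^ 2 • u - ⟪n, u⟫ • n⟫ = 0 := by
    rw [inner_sub_right, real_inner_smul_right, real_inner_smul_right, real_inner_self_eq_norm_sq]
    ring
  simpa [sub_eq_zero] using hD _ hperp

theorem inner_smul_sub_inner_smul_eq_of_forall_inner_eq_zero {L M : E →ₗ[ℝ] F} {n : E}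
    (hLM : ∀ t, ⟪n, t⟫ = 0 → L t = M t) (v e : E) :
    ⟪v, n⟫ • L e - ⟪n, e⟫ • L v = ⟪v, n⟫ • M e - ⟪n, e⟫ • M v := by
  rcases eq_or_ne n 0 with rfl | hn
  · simp
  have hD : ∀ t, ⟪n, t⟫ = 0 → (L - M) t = 0 := fun t ht => sub_eq_zero.mpr (hLM t ht)
  have hDe := (L - M).norm_sq_smul_apply_eq_inner_smul_apply hD e
  have hDv := (L - M).norm_sq_smul_apply_eq_inner_smul_apply hD v
  have hnorm : ‖n‖ ^ 2 ≠ 0 := pow_ne_zero 2 (norm_ne_zero_iff.mpr hn)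
  have hDzero : ⟪v, n⟫ • (L - M) e - ⟪n, e⟫ • (L - M) v = 0 := by
    refine smul_right_injective F hnorm ?_
    simp only [smul_sub, smul_zero, smul_comm (‖n‖ ^ 2), hDe, hDv, smul_smul]
    rw [real_inner_comm, mul_comm, sub_self]
  simpa only [LinearMap.sub_apply, smul_sub, sub_sub_sub_comm, sub_eq_zero] using hDzero

end LinearAlgebra

section Curves

variable {E F : Type*} [NormedAddCommGroup E] [NormedSpace ℝ E] [NormedAddCommGroup F]
  [NormedSpace ℝ F]

theorem HasFDerivAt.apply_eq_of_eqOn_of_hasDerivAt {f g : E → F} {f' g' : E →L[ℝ] F}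
    {s : Set E} {x t : E} {γ : ℝ → E} (hf : HasFDerivAt f f' x) (hg : HasFDerivAt g g' x)
    (hfg : Set.EqOn f g s) (hγs : ∀ τ, γ τ ∈ s) (hγ₀ : γ 0 = x) (hγ : HasDerivAt γ t 0) :
    f' t = g' t := by
  have hfγ := hf.comp_hasDerivAt_of_eq 0 hγ hγ₀.symm
  have hgγ := hg.comp_hasDerivAt_of_eq 0 hγ hγ₀.symm
  rw [show f ∘ γ = g ∘ γ from funext fun τ => hfg (hγs τ)] at hfγ
  exact hfγ.unique hgγ

end Curves

section Sphere

variable {E F : Type*} [NormedAddCommGroup E] [InnerProductSpace ℝ E] [NormedAddCommGroup F]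
  [NormedSpace ℝ F]

theorem exists_hasDerivAt_mem_sphere_of_inner_eq_zero {c x t : E} {R : ℝ} (hR : R ≠ 0)
    (hx : x ∈ Metric.sphere c R) (ht : ⟪x - c, t⟫ = 0) :
    ∃ γ : ℝ → E, (∀ τ, γ τ ∈ Metric.sphere c R) ∧ γ 0 = x ∧ HasDerivAt γ t 0 := by
  have hxc : ‖x - c‖ = R := by rwa [← dist_eq_norm, ← Metric.mem_sphere]
  have hRpos : 0 < R := lt_of_le_of_ne (hxc ▸ norm_nonneg _) hR.symm
  have hy_ne : ∀ τ : ℝ, x - c + τ • t ≠ 0 := by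
    intro τ hτ
    have := congrArg (fun y => ‖y‖ ^ 2) hτ
    simp only [norm_add_sq_real, real_inner_smul_right, ht, norm_smul, hxc, norm_zero] at this
    nlinarith [sq_nonneg (‖τ‖ * ‖t‖)]
  have hy : HasDerivAt (fun τ : ℝ => x - c + τ • t) t 0 := by
    simpa using ((hasDerivAt_id (0 : ℝ)).smul_const t).const_add (x - c)
  have hnorm : HasDerivAt (fun τ : ℝ => ‖x - c + τ • t‖) 0 0 := by
    have := hy.norm_sq.sqrt (by simp [hxc, hR])
    simpa [Real.sqrt_sq, ht] using this
  -- radial projection of the tangent line `τ ↦ x + τ • t` onto the sphere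
  refine ⟨fun τ => c + (R / ‖x - c + τ • t‖) • (x - c + τ • t), fun τ => ?_, by simp [hxc, hR], ?_⟩
  · rw [mem_sphere_iff_norm, add_sub_cancel_left, norm_smul, norm_div, Real.norm_eq_abs,
      abs_of_pos hRpos, norm_norm, div_mul_cancel₀ _ (norm_ne_zero_iff.mpr (hy_ne τ))]
  · have := ((hnorm.inv (by simp [hxc, hR])).const_mul R).smul hy
    simpa [hxc, hR, div_eq_mul_inv] using this.const_add c

theorem HasFDerivAt.apply_eq_of_eqOn_sphere {f g : E → F} {f' g' : E →L[ℝ] F} {c x t : E}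
    {R : ℝ} (hf : HasFDerivAt f f' x) (hg : HasFDerivAt g g' x)
    (hfg : Set.EqOn f g (Metric.sphere c R)) (hR : R ≠ 0) (hx : x ∈ Metric.sphere c R)
    (ht : ⟪x - c, t⟫ = 0) : f' t = g' t :=
  have ⟨_, hγs, hγ₀, hγ⟩ := exists_hasDerivAt_mem_sphere_of_inner_eq_zero hR hx ht
  hf.apply_eq_of_eqOn_of_hasDerivAt hg hfg hγs hγ₀ hγ

end Sphere

/-- The Newtonian backreaction surface integral over the sphere `S(0,R)`
depends only on the boundary values of the velocity inhomogeneity: if two C¹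
fields `δv`, `δw` agree on the sphere, then
`∫_{S(0,R)} [⟨δv,n⟩ (Dδv)_{ab} − (Dδv·δv)_a n_b] dμH²` computed from the two
fields coincide (the normal derivative drops out by antisymmetrization). -/
theorem backreaction_depends_only_on_boundary_values (R : ℝ) (hR : 0 < R)
    (δv δw : E3 → E3)
    (hv : ∃ U : Set E3, IsOpen U ∧ Metric.sphere (0 : E3) R ⊆ U ∧
      ContDiffOn ℝ 1 δv U)
    (hw : ∃ U : Set E3, IsOpen U ∧ Metric.sphere (0 : E3) R ⊆ U ∧
      ContDiffOn ℝ 1 δw U)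
    (heq : ∀ x ∈ Metric.sphere (0 : E3) R, δv x = δw x)
    (a b : Fin 3) :
    ∫ x in Metric.sphere (0 : E3) R,
      (⟪δv x, R⁻¹ • x⟫ * (fderiv ℝ δv x (EuclideanSpace.single b 1)) a
        - (fderiv ℝ δv x (δv x)) a * (R⁻¹ * x b)) ∂μH[2]
    = ∫ x in Metric.sphere (0 : E3) R,
      (⟪δw x, R⁻¹ • x⟫ * (fderiv ℝ δw x (EuclideanSpace.single b 1)) a
        - (fderiv ℝ δw x (δw x)) a * (R⁻¹ * x b)) ∂μH[2] := by
  have hasFDerivAt_of_contDiffOn : ∀ {f : E3 → E3}, (∃ U : Set E3, IsOpen U ∧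
      Metric.sphere (0 : E3) R ⊆ U ∧ ContDiffOn ℝ 1 f U) →
      ∀ x ∈ Metric.sphere (0 : E3) R, HasFDerivAt f (fderiv ℝ f x) x := by
    rintro f ⟨U, hU, hSU, hf⟩ x hx
    exact ((hf.differentiableOn one_ne_zero).differentiableAt (hU.mem_nhds (hSU hx))).hasFDerivAt
  refine setIntegral_congr_fun Metric.isClosed_sphere.measurableSet fun x hx => ?_
  have htangent : ∀ t, ⟪R⁻¹ • x, t⟫ = 0 → fderiv ℝ δv x t = fderiv ℝ δw x t := by
    intro t ht
    refine (hasFDerivAt_of_contDiffOn hv x hx).apply_eq_of_eqOn_sphere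
      (hasFDerivAt_of_contDiffOn hw x hx) heq hR.ne' hx ?_
    simpa [real_inner_smul_left, hR.ne'] using ht
  have hcoord := congrArg (· a) (inner_smul_sub_inner_smul_eq_of_forall_inner_eq_zero
    (L := (fderiv ℝ δv x : E3 →ₗ[ℝ] E3)) htangent (δw x) (EuclideanSpace.single b 1))
  simp only [heq x hx]
  simpa [EuclideanSpace.inner_single_right, real_inner_smul_left, mul_comm] using hcoord
end
end
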